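/- arXiv:1711.01462 — 3 statements merged into one kernel-verified Lean document; each statement's English description precedes it below -/
import Mathlib

section
/- If X is connected, locally path connected, and a strong SLT space at x₀, then every semicovering map over X is a covering map. -/
open CategoryTheory unitInterval
open scoped Topology

attribute [local instance] Path.Homotopic.setoid

noncomputable section

/-- The homotopy class of a loop as an element of the fundamental group. -/
def loopClass {X : Type*} [TopologicalSpace X] {x : X} (γ : Path x x) :
    FundamentalGroup X x :=
  FundamentalGroup.fromPath (⟦γ⟧ : Path.Homotopic.Quotient x x)

variable {X : Type*} [TopologicalSpace X]

/-- The Spanier group of a family of subsets of `X`, based at `x`: the subgroup generated by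
classes `[α∗β∗α⁻¹]` where `α` is a path from `x` and `β` is a loop inside a member of `𝒰`. -/
def spanierGroupAt (x : X) (𝒰 : Set (Set X)) : Subgroup (FundamentalGroup X x) :=
  Subgroup.closure {g | ∃ (y : X) (α : Path x y) (β : Path y y) (U : Set X),
    U ∈ 𝒰 ∧ (∀ t, β t ∈ U) ∧ g = loopClass (α.trans (β.trans α.symm))}

/-- `𝒰` is an open cover of `X`. -/
def IsOpenCover (𝒰 : Set (Set X)) : Prop := (∀ U ∈ 𝒰, IsOpen U) ∧ ⋃₀ 𝒰 = Set.univ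

/-- `X` is a strong `H`-SLT space at `x₀`: for every `x ∈ X` and every open neighborhood `U`
of `x₀` there is an open neighborhood `V` of `x` such that for every loop `β` in `V` based at
`x` and every path `α` from `x₀` to `x` there is a loop `λ` in `U` based at `x₀` with
`[α∗β∗α⁻¹∗λ⁻¹] ∈ H`. -/
def StrongHSLTAt (x₀ : X) (H : Subgroup (FundamentalGroup X x₀)) : Prop :=
  ∀ (x : X) (U : Set X), IsOpen U → x₀ ∈ U →
    ∃ V : Set X, IsOpen V ∧ x ∈ V ∧
      ∀ (β : Path x x), (∀ t, β t ∈ V) → ∀ (α : Path x₀ x),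
        ∃ lam : Path x₀ x₀, (∀ t, lam t ∈ U) ∧
          loopClass (α.trans (β.trans α.symm)) * (loopClass lam)⁻¹ ∈ H

/-- A semicovering map: a local homeomorphism with unique continuous lifting of paths
and of homotopies. -/
structure IsSemicoveringMap {E : Type*} [TopologicalSpace E] (p : E → X) : Prop where
  isLocalHomeomorph : IsLocalHomeomorph p
  path_lift : ∀ (γ : C(I, X)) (e : E), p e = γ 0 →
    ∃! γ' : C(I, E), p ∘ γ' = γ ∧ γ' 0 = e
  homotopy_lift : ∀ (Hm : C(I × I, X)) (e : E), p e = Hm (0, 0) →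
    ∃! H' : C(I × I, E), p ∘ H' = Hm ∧ H' (0, 0) = e

/-!
Fix `e₀` over `x₀` and a local inverse `φ` of `p` at `e₀`. Given `x`, the strong SLT property
for the neighbourhood `φ.target` of `x₀` gives an open `V ∋ x` such that each conjugate
`α ∗ β ∗ α⁻¹` of a loop `β` in `V` at `x` is homotopic to a loop in `φ.target`, which lifts to a
loop at `e₀`. By homotopy lifting the conjugate lifts to a loop at `e₀` as well, so `β` lifts to
a loop at the endpoint of the lift of `α`; as `E` is path connected, every point over `x` is such
an endpoint. Conjugating along paths in `V`, every loop in the path component `V'` of `x` in `V`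
lifts to loops. Hence the path components of `p⁻¹(V')` through the points over `x` are disjoint
open sheets exhausting `p⁻¹(V')`, each mapped bijectively, and so (as `p` is open)
homeomorphically, onto `V'`.
-/

namespace IsSemicoveringMap

variable {E : Type*} [TopologicalSpace E] {p : E → X} (hp : IsSemicoveringMap p) {a b c : X}

/-- The endpoint of the lift of `γ` starting at `e`; junk value `e` when `p e ≠ a`. -/
def liftEnd (γ : Path a b) (e : E) : E :=
  open Classical in
  if he : p e = a then (hp.path_lift γ.toContinuousMap e (by simpa using he)).exists.choose 1
  else e

theorem exists_lift (γ : Path a b) {e : E} (he : p e = a) :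
    ∃ η : Path e (hp.liftEnd γ e), ∀ t, p (η t) = γ t := by
  obtain ⟨hη, hη₀⟩ := (hp.path_lift γ.toContinuousMap e (by simpa using he)).exists.choose_spec
  refine ⟨⟨_, hη₀, by simp [liftEnd, he]⟩, fun t => congrFun hη t⟩

theorem liftEnd_eq_of_lift (γ : Path a b) (η : C(I, E)) (hη : ∀ t, p (η t) = γ t) :
    hp.liftEnd γ (η 0) = η 1 := by
  have he : p (η 0) = a := by simpa using hη 0
  obtain ⟨η', hη'⟩ := hp.exists_lift γ he
  have : η = η'.toContinuousMap :=
    (hp.path_lift γ.toContinuousMap (η 0) (by simpa using he)).unique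
      ⟨funext hη, rfl⟩ ⟨funext hη', by simp⟩
  rw [show η 1 = η' 1 from congrArg (· 1) this, η'.target]

theorem liftEnd_eq_of_pathLift (γ : Path a b) {e e' : E} (η : Path e e')
    (hη : ∀ t, p (η t) = γ t) : hp.liftEnd γ e = e' := by
  simpa using hp.liftEnd_eq_of_lift γ η.toContinuousMap hη

theorem proj_liftEnd (γ : Path a b) {e : E} (he : p e = a) : p (hp.liftEnd γ e) = b := by
  obtain ⟨η, hη⟩ := hp.exists_lift γ he
  simpa using hη 1

theorem liftEnd_refl {e : E} (he : p e = a) : hp.liftEnd (Path.refl a) e = e :=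
  hp.liftEnd_eq_of_pathLift _ (Path.refl e) fun _ => he

theorem liftEnd_trans (α : Path a b) (β : Path b c) {e : E} (he : p e = a) :
    hp.liftEnd (α.trans β) e = hp.liftEnd β (hp.liftEnd α e) := by
  obtain ⟨η, hη⟩ := hp.exists_lift α he
  obtain ⟨η', hη'⟩ := hp.exists_lift β (hp.proj_liftEnd α he)
  refine hp.liftEnd_eq_of_pathLift _ (η.trans η') fun t => ?_
  simp only [Path.trans_apply]
  split_ifs
  exacts [hη _, hη' _]

theorem liftEnd_symm_liftEnd (γ : Path a b) {e : E} (he : p e = a) :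
    hp.liftEnd γ.symm (hp.liftEnd γ e) = e := by
  obtain ⟨η, hη⟩ := hp.exists_lift γ he
  exact hp.liftEnd_eq_of_pathLift _ η.symm fun t => hη _

theorem liftEnd_liftEnd_symm (γ : Path a b) {e : E} (he : p e = b) :
    hp.liftEnd γ (hp.liftEnd γ.symm e) = e := by
  simpa using hp.liftEnd_symm_liftEnd γ.symm he

theorem liftEnd_eq_of_homotopic {γ₁ γ₂ : Path a b} (h : γ₁.Homotopic γ₂) {e : E}
    (he : p e = a) : hp.liftEnd γ₁ e = hp.liftEnd γ₂ e := by
  obtain ⟨H⟩ := h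
  obtain ⟨K, hK, hK₀⟩ := (hp.homotopy_lift H e (by simpa using he)).exists
  have hpK : ∀ s t, p (K (s, t)) = H (s, t) := fun s t => congrFun hK (s, t)
  -- The edges of the lifted square lift `γ₁`, `γ₂` and two constant paths.
  have left : hp.liftEnd γ₁ e = K (0, 1) := hK₀ ▸
    hp.liftEnd_eq_of_lift γ₁ ⟨fun t => K (0, t), by fun_prop⟩ fun t => by simp [hpK]
  have bottom : K (1, 0) = e := by
    have := hp.liftEnd_eq_of_lift (.refl a) ⟨fun s => K (s, 0), by fun_prop⟩ fun s => by simp [hpK]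
    simpa [hK₀, hp.liftEnd_refl he] using this.symm
  have right : hp.liftEnd γ₂ e = K (1, 1) := bottom ▸
    hp.liftEnd_eq_of_lift γ₂ ⟨fun t => K (1, t), by fun_prop⟩ fun t => by simp [hpK]
  have top : K (1, 1) = K (0, 1) := by
    have := hp.liftEnd_eq_of_lift (.refl b) ⟨fun s => K (s, 1), by fun_prop⟩ fun s => by simp [hpK]
    simpa [hp.liftEnd_refl (show p (K (0, 1)) = b by simp [hpK])] using this.symm
  rw [left, right, top]

theorem liftEnd_eq_of_mem_target (φ : OpenPartialHomeomorph E X) (hφ : p = φ) (γ : Path a b)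
    (hγ : ∀ t, γ t ∈ φ.target) : hp.liftEnd γ (φ.symm a) = φ.symm b := by
  simpa using hp.liftEnd_eq_of_lift γ
    ⟨fun t => φ.symm (γ t), φ.continuousOn_symm.comp_continuous γ.continuous hγ⟩
    fun t => by simp [hφ, φ.right_inv (hγ t)]

theorem liftEnd_eq_self_of_liftEnd_conj (α : Path a b) (β : Path b b) {e : E} (he : p e = b)
    (h : hp.liftEnd (α.trans (β.trans α.symm)) (hp.liftEnd α.symm e) = hp.liftEnd α.symm e) :
    hp.liftEnd β e = e := by
  have he' : p (hp.liftEnd α.symm e) = a := by simpa using hp.proj_liftEnd α.symm he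
  rw [hp.liftEnd_trans _ _ he', hp.liftEnd_liftEnd_symm α he, hp.liftEnd_trans _ _ he] at h
  rw [← hp.liftEnd_liftEnd_symm α (hp.proj_liftEnd β he), h, hp.liftEnd_liftEnd_symm α he]

theorem surjective (hp : IsSemicoveringMap p) [PathConnectedSpace X] [Nonempty E] :
    Function.Surjective p := fun x =>
  let e := Classical.arbitrary E
  ⟨hp.liftEnd (PathConnectedSpace.somePath (p e) x) e, hp.proj_liftEnd _ rfl⟩

def LoopsInLiftToLoops (V : Set X) : Prop :=
  ∀ ⦃y : X⦄ (γ : Path y y), (∀ t, γ t ∈ V) → ∀ ⦃e : E⦄, p e = y → hp.liftEnd γ e = e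

theorem loopsInLiftToLoops_pathComponentIn {V : Set X} {x : X}
    (hV : ∀ β : Path x x, (∀ t, β t ∈ V) → ∀ ⦃e : E⦄, p e = x → hp.liftEnd β e = e) :
    hp.LoopsInLiftToLoops (pathComponentIn V x) := by
  intro y γ hγ e he
  have hxy : JoinedIn V x y := γ.source ▸ hγ 0
  refine hp.liftEnd_eq_self_of_liftEnd_conj hxy.somePath γ he
    (hV _ (fun t => ?_) (by simpa using hp.proj_liftEnd _ he))
  have hγV : Set.range γ ⊆ V := Set.range_subset_iff.2 fun t => pathComponentIn_subset (hγ t)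
  have hδV : Set.range hxy.somePath ⊆ V := Set.range_subset_iff.2 hxy.somePath_mem
  have : Set.range (hxy.somePath.trans (γ.trans hxy.somePath.symm)) ⊆ V := by
    simp [Path.trans_range, Path.symm_range, hγV, hδV]
  exact this ⟨t, rfl⟩

theorem exists_isOpen_forall_loop_liftEnd_eq_self [PathConnectedSpace E] {x₀ : X} {e₀ : E}
    (he₀ : p e₀ = x₀) (hX : StrongHSLTAt x₀ ⊥) (x : X) :
    ∃ V, IsOpen V ∧ x ∈ V ∧
      ∀ β : Path x x, (∀ t, β t ∈ V) → ∀ ⦃e : E⦄, p e = x → hp.liftEnd β e = e := by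
  obtain ⟨φ, he₀φ, hφ⟩ := hp.isLocalHomeomorph e₀
  have hφe₀ : φ.symm x₀ = e₀ := by rw [← he₀, hφ]; exact φ.left_inv he₀φ
  obtain ⟨V, hVo, hxV, hV⟩ := hX x φ.target φ.open_target (he₀ ▸ hφ ▸ φ.map_source he₀φ)
  refine ⟨V, hVo, hxV, fun β hβ e he => ?_⟩
  let α : Path x₀ x :=
    ((PathConnectedSpace.somePath e₀ e).map hp.isLocalHomeomorph.continuous).cast he₀.symm he.symm
  have hαe : hp.liftEnd α.symm e = e₀ := by
    rw [← hp.liftEnd_eq_of_pathLift α (PathConnectedSpace.somePath e₀ e) fun t => rfl,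
      hp.liftEnd_symm_liftEnd α he₀]
  obtain ⟨lam, hlam, hconj⟩ := hV β hβ α
  have hhom : (α.trans (β.trans α.symm)).Homotopic lam := by
    have := mul_inv_eq_one.mp (Subgroup.mem_bot.mp hconj)
    exact Quotient.exact this
  refine hp.liftEnd_eq_self_of_liftEnd_conj α β he ?_
  rw [hαe, hp.liftEnd_eq_of_homotopic hhom he₀, ← hφe₀,
    hp.liftEnd_eq_of_mem_target φ hφ lam hlam]

theorem joinedIn_liftEnd {V : Set X} (γ : Path a b) (hγ : ∀ t, γ t ∈ V) {e : E}
    (he : p e = a) : JoinedIn (p ⁻¹' V) e (hp.liftEnd γ e) := by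
  obtain ⟨η, hη⟩ := hp.exists_lift γ he
  exact ⟨η, fun t => by simpa [hη] using hγ t⟩

theorem surjOn_pathComponentIn (hp : IsSemicoveringMap p) {V : Set X} (hV : IsPathConnected V)
    {e : E} (he : p e ∈ V) :
    Set.SurjOn p (pathComponentIn (p ⁻¹' V) e) V := fun w hw =>
  have hJ := hV.joinedIn _ he w hw
  ⟨_, hp.joinedIn_liftEnd _ hJ.somePath_mem rfl, hp.proj_liftEnd _ rfl⟩

theorem injOn_pathComponentIn {V : Set X} (hV : hp.LoopsInLiftToLoops V) (e : E) :
    Set.InjOn p (pathComponentIn (p ⁻¹' V) e) := by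
  intro a ha b hb hab
  have hJ : JoinedIn (p ⁻¹' V) a b := ha.symm.trans hb
  let γ : Path (p a) (p a) := (hJ.somePath.map hp.isLocalHomeomorph.continuous).cast rfl hab
  rw [← hp.liftEnd_eq_of_pathLift γ hJ.somePath fun t => rfl]
  exact (hV γ (fun t => hJ.somePath_mem t) rfl).symm

open Function in
theorem pairwise_disjoint_pathComponentIn_fiber {V : Set X} (hV : hp.LoopsInLiftToLoops V)
    (x : X) : Pairwise (Disjoint on fun i : p ⁻¹' {x} => pathComponentIn (p ⁻¹' V) (i : E)) := by
  intro i j hij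
  refine Set.disjoint_left.2 fun e hi hj => hij (Subtype.ext ?_)
  have hji : (j : E) ∈ pathComponentIn (p ⁻¹' V) i := by
    rw [← pathComponentIn_congr hi, pathComponentIn_congr hj]
    exact mem_pathComponentIn_self hj.source_mem
  exact hp.injOn_pathComponentIn hV i (mem_pathComponentIn_self hji.source_mem) hji
    (i.2.trans j.2.symm)

theorem isEvenlyCovered_of_loopsInLiftToLoops [LocallyPathConnectedSpace E] {V : Set X}
    (hVo : IsOpen V) (hVc : IsPathConnected V) (hV : hp.LoopsInLiftToLoops V) {x : X}
    (hx : x ∈ V) (hfib : (p ⁻¹' {x}).Nonempty) : IsEvenlyCovered p x (p ⁻¹' {x}) := by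
  have : DiscreteTopology (p ⁻¹' {x}) :=
    (IsDiscrete.of_openPartialHomeomorph p subset_rfl fun e _ =>
      (hp.isLocalHomeomorph e).imp fun _ h => ⟨h.1, h.2.symm⟩).1
  have : Nonempty (p ⁻¹' {x}) := hfib.to_subtype
  have : Nonempty (X → E) := ⟨fun _ => hfib.some⟩
  let S : p ⁻¹' {x} → Set E := fun i => pathComponentIn (p ⁻¹' V) i
  have hS : ∀ i, IsOpen (S i) := fun i =>
    (hVo.preimage hp.isLocalHomeomorph.continuous).pathComponentIn _
  have hpS : ∀ i, Set.SurjOn p (S i) V := fun i =>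
    hp.surjOn_pathComponentIn hVc (by rwa [show p i = x from i.2])
  refine .of_trivialization (t := hVo.trivializationDiscrete S V
    (fun i W hWV => ⟨fun hW => (hW.preimage hp.isLocalHomeomorph.continuous).inter (hS i),
      fun hW => ?_⟩)
    (fun i => hp.injOn_pathComponentIn hV i) hpS (hp.pairwise_disjoint_pathComponentIn_fiber hV x)
    fun e he => ?_) hx
  · have := hp.isLocalHomeomorph.isOpenMap _ hW
    rwa [Set.image_preimage_inter, Set.inter_eq_left.2 (hWV.trans (hpS i))] at this
  · have hJ := hVc.joinedIn _ he x hx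
    exact Set.mem_iUnion.2 ⟨⟨_, hp.proj_liftEnd hJ.somePath rfl⟩,
      (hp.joinedIn_liftEnd _ hJ.somePath_mem rfl).symm⟩

end IsSemicoveringMap

theorem semicovering_isCoveringMap_of_strongSLTAt
    {X' : Type*} [TopologicalSpace X'] [ConnectedSpace X'] [LocallyPathConnectedSpace X']
    (x₀ : X') (hX : StrongHSLTAt x₀ (⊥ : Subgroup (FundamentalGroup X' x₀))) :
    ∀ (E : Type*) [TopologicalSpace E] [ConnectedSpace E] [LocallyPathConnectedSpace E]
      (p : E → X'), IsSemicoveringMap p → IsCoveringMap p := by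
  intro E _ _ _ p hp x
  have : PathConnectedSpace X' := pathConnectedSpace_iff_connectedSpace.mpr ‹_›
  have : PathConnectedSpace E := pathConnectedSpace_iff_connectedSpace.mpr ‹_›
  obtain ⟨e₀, he₀⟩ := hp.surjective x₀
  obtain ⟨V, hVo, hxV, hV⟩ := hp.exists_isOpen_forall_loop_liftEnd_eq_self he₀ hX x
  exact hp.isEvenlyCovered_of_loopsInLiftToLoops (hVo.pathComponentIn x)
    (isPathConnected_pathComponentIn hxV) (hp.loopsInLiftToLoops_pathComponentIn hV)
    (mem_pathComponentIn_self hxV) (hp.surjective x)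
end
end

section
/- If X is an SLT space at x₀, then the small loop subgroup π₁^s(X,x₀) equals the path Spanier group π̃₁^{sp}(X,x₀). -/
open CategoryTheory unitInterval
open scoped Topology

attribute [local instance] Path.Homotopic.setoid

noncomputable section

variable {X : Type*} [TopologicalSpace X]

/-- The set of classes of small loops at `x₀`: loops that, for every open neighborhood `U`
of `x₀`, are homotopic (rel endpoints) to a loop inside `U`. -/
def smallLoopSet (x₀ : X) : Set (FundamentalGroup X x₀) :=
  {g | ∀ U : Set X, IsOpen U → x₀ ∈ U →
    ∃ γ : Path x₀ x₀, (∀ t, γ t ∈ U) ∧ loopClass γ = g}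

/-- A path open cover: a choice, for each path `α` from `x₀`, of an open neighborhood
of its endpoint `α(1)`. -/
def IsPathOpenCover (x₀ : X) (V : (Σ y : X, Path x₀ y) → Set X) : Prop :=
  ∀ a, IsOpen (V a) ∧ a.1 ∈ V a

/-- The path Spanier subgroup `π̃(𝒱, x₀)`, generated by `[α∗β∗α⁻¹]` with `β` a loop
in `V_α`. -/
def pathSpanierSub (x₀ : X) (V : (Σ y : X, Path x₀ y) → Set X) :
    Subgroup (FundamentalGroup X x₀) :=
  Subgroup.closure {g | ∃ (y : X) (α : Path x₀ y) (β : Path y y),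
    (∀ t, β t ∈ V ⟨y, α⟩) ∧ g = loopClass (α.trans (β.trans α.symm))}

/-- The path Spanier group `π̃₁^{sp}(X, x₀)`: the intersection of all path Spanier
subgroups over path open covers. -/
def pathSpanierWhole (x₀ : X) : Subgroup (FundamentalGroup X x₀) :=
  ⨅ (V : (Σ y : X, Path x₀ y) → Set X) (_ : IsPathOpenCover x₀ V), pathSpanierSub x₀ V

/-- The Spanier group `π₁^{sp}(X, x₀)`: the intersection of the Spanier subgroups over all
open covers of `X`. -/
def spanierWhole (x₀ : X) : Subgroup (FundamentalGroup X x₀) :=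
  ⨅ (𝒰 : Set (Set X)) (_ : IsOpenCover 𝒰), spanierGroupAt x₀ 𝒰

/-- `X` is an SLT space at `x₀`. -/
def SLTAt (x₀ : X) : Prop :=
  ∀ (y : X) (α : Path x₀ y) (U : Set X), IsOpen U → x₀ ∈ U →
    ∃ V : Set X, IsOpen V ∧ y ∈ V ∧
      ∀ (β : Path y y), (∀ t, β t ∈ V) →
        ∃ lam : Path x₀ x₀, (∀ t, lam t ∈ U) ∧
          loopClass (α.trans (β.trans α.symm)) = loopClass lam

/-! A small loop, conjugated by the constant path, is a generator of every path Spanier subgroup,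
so `π₁^s(X, x₀) ⊆ π̃₁^{sp}(X, x₀)` in any space. Conversely, fix an open neighbourhood `U` of `x₀`.
The SLT property gives, for each path `α` from `x₀`, a neighbourhood `V_α` of `α(1)` such that every
generator `[α∗β∗α⁻¹]` of `π̃(𝒱, x₀)` is represented by a loop in `U`. Classes of loops in `U` form a
subgroup, so all of `π̃(𝒱, x₀)`, and hence `π̃₁^{sp}(X, x₀)`, consists of such classes. -/

lemma loopClass_refl (x : X) : loopClass (Path.refl x) = 1 := rfl

lemma loopClass_mul {x : X} (γ₁ γ₂ : Path x x) :
    loopClass γ₁ * loopClass γ₂ = loopClass (γ₂.trans γ₁) := rfl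

lemma loopClass_inv {x : X} (γ : Path x x) : (loopClass γ)⁻¹ = loopClass γ.symm := rfl

lemma loopClass_refl_trans_trans_refl_symm {x : X} (γ : Path x x) :
    loopClass ((Path.refl x).trans (γ.trans (Path.refl x).symm)) = loopClass γ := by
  rw [Path.refl_symm]
  exact Quotient.sound ⟨(Path.Homotopy.reflTrans _).trans (Path.Homotopy.transRefl γ)⟩

def loopsWithin (x₀ : X) (U : Set X) (hx : x₀ ∈ U) : Subgroup (FundamentalGroup X x₀) where
  carrier := {g | ∃ γ : Path x₀ x₀, (∀ t, γ t ∈ U) ∧ loopClass γ = g}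
  one_mem' := ⟨Path.refl x₀, fun _ => hx, loopClass_refl x₀⟩
  mul_mem' := by
    rintro _ _ ⟨γ₁, h₁, rfl⟩ ⟨γ₂, h₂, rfl⟩
    refine ⟨γ₂.trans γ₁, fun t => ?_, (loopClass_mul γ₁ γ₂).symm⟩
    have : (γ₂.trans γ₁) t ∈ Set.range γ₂ ∪ Set.range γ₁ := Path.trans_range γ₂ γ₁ ▸ ⟨t, rfl⟩
    rcases this with ⟨s, hs⟩ | ⟨s, hs⟩
    · exact hs ▸ h₂ s
    · exact hs ▸ h₁ s
  inv_mem' := by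
    rintro _ ⟨γ, h, rfl⟩
    exact ⟨γ.symm, fun t => h _, (loopClass_inv γ).symm⟩

lemma smallLoopSet_subset_pathSpanierSub {x₀ : X} {V : (Σ y : X, Path x₀ y) → Set X}
    (hV : IsPathOpenCover x₀ V) : smallLoopSet x₀ ⊆ pathSpanierSub x₀ V := by
  intro g hg
  obtain ⟨hVo, hx⟩ := hV ⟨x₀, Path.refl x₀⟩
  obtain ⟨γ, hγ, rfl⟩ := hg _ hVo hx
  exact Subgroup.subset_closure
    ⟨x₀, Path.refl x₀, γ, hγ, (loopClass_refl_trans_trans_refl_symm γ).symm⟩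

lemma smallLoopSet_subset_pathSpanierWhole (x₀ : X) :
    smallLoopSet x₀ ⊆ pathSpanierWhole x₀ := fun _ hg =>
  Subgroup.mem_iInf.2 fun _ =>
    Subgroup.mem_iInf.2 fun hV => smallLoopSet_subset_pathSpanierSub hV hg

lemma SLTAt.exists_pathSpanierSub_le {x₀ : X} (hSLT : SLTAt x₀) {U : Set X} (hU : IsOpen U)
    (hx : x₀ ∈ U) :
    ∃ V, IsPathOpenCover x₀ V ∧ pathSpanierSub x₀ V ≤ loopsWithin x₀ U hx := by
  choose V hVo hVmem hV using fun a : Σ y : X, Path x₀ y => hSLT a.1 a.2 U hU hx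
  refine ⟨V, fun a => ⟨hVo a, hVmem a⟩, (Subgroup.closure_le _).2 ?_⟩
  rintro _ ⟨y, α, β, hβ, rfl⟩
  obtain ⟨lam, hlam, hclass⟩ := hV ⟨y, α⟩ β hβ
  exact ⟨lam, hlam, hclass.symm⟩

lemma SLTAt.pathSpanierWhole_subset_smallLoopSet {x₀ : X} (hSLT : SLTAt x₀) :
    (pathSpanierWhole x₀ : Set (FundamentalGroup X x₀)) ⊆ smallLoopSet x₀ := by
  intro g hg U hU hx
  obtain ⟨V, hV, hle⟩ := hSLT.exists_pathSpanierSub_le hU hx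
  exact hle (Subgroup.mem_iInf.1 (Subgroup.mem_iInf.1 hg V) hV)

theorem smallLoopSet_eq_pathSpanier_of_SLT {x₀ : X} (hSLT : SLTAt x₀) :
    smallLoopSet x₀ = (pathSpanierWhole x₀ : Set (FundamentalGroup X x₀)) :=
  (smallLoopSet_subset_pathSpanierWhole x₀).antisymm hSLT.pathSpanierWhole_subset_smallLoopSet

end
end

section
/- If H is an open subgroup of π₁^{l}(X,x₀), then X is a strong H-SLT space. -/
open CategoryTheory unitInterval
open scoped Topology

attribute [local instance] Path.Homotopic.setoid

noncomputable section

variable {X : Type*} [TopologicalSpace X]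

/-- The conjugate subgroup `[δ⁻¹ H δ]` of the fundamental group at the endpoint of `δ`. -/
def conjSubgroup {x₀ x : X} (δ : Path x₀ x) (H : Subgroup (FundamentalGroup X x₀)) :
    Subgroup (FundamentalGroup X x) :=
  H.map (FundamentalGroup.fundamentalGroupMulEquivOfPath δ).toMonoidHom

/-- `X` is a strong `H`-SLT space: for every `x ∈ X` and every path `δ` from `x₀` to `x`,
`X` is a strong `[δ⁻¹Hδ]`-SLT space at `x`. -/
def StrongHSLT (x₀ : X) (H : Subgroup (FundamentalGroup X x₀)) : Prop :=
  ∀ (x : X) (δ : Path x₀ x), StrongHSLTAt x (conjSubgroup δ H)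

/-- The whisker topology on the fundamental group at `x₀`: the subspace topology inherited
from the whisker topology on the universal path space. -/
def whiskerPi1 (x₀ : X) : TopologicalSpace (FundamentalGroup X x₀) :=
  TopologicalSpace.generateFrom
    {S | ∃ (x : X) (α : Path x₀ x) (U : Set X), IsOpen U ∧ x ∈ U ∧
      S = {g | ∃ lam : Path x x₀, (∀ t, lam t ∈ U) ∧ g = loopClass (α.trans lam)}}

/-- The lasso topology on the fundamental group at `x₀`: the subspace topology inherited
from the lasso topology on the universal path space. -/
def lassoPi1 (x₀ : X) : TopologicalSpace (FundamentalGroup X x₀) :=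
  TopologicalSpace.generateFrom
    {S | ∃ (x : X) (α : Path x₀ x) (𝒰 : Set (Set X)) (U : Set X),
      IsOpenCover 𝒰 ∧ U ∈ 𝒰 ∧ x ∈ U ∧
      S = {g | ∃ (γ : Path x x) (δ : Path x x₀), loopClass γ ∈ spanierGroupAt x 𝒰 ∧
            (∀ t, δ t ∈ U) ∧ g = loopClass ((α.trans γ).trans δ)}}

/-! An open subgroup `H` of `π₁^l(X, x₀)` contains a Spanier group `π(𝒰, x₀)` of some open cover:
every basic lasso neighbourhood of `1` contains the Spanier group of its cover, and common
refinements of covers have smaller Spanier groups. Spanier groups are carried onto each other by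
change of basepoint, so `[δ⁻¹Hδ] ⊇ π(𝒰, x)`. Given `y`, take `V ∈ 𝒰` containing `y`: every
lasso `[α∗β∗α⁻¹]` with `β` in `V` is then a generator of `π(𝒰, x)`, and `λ` may be taken
constant. -/

open FundamentalGroup Path.Homotopic.Quotient

/-- The basic open set `B([α], 𝒰, U)` of the lasso topology, in the form used by `lassoPi1`. -/
def lassoBasicSet {x₀ x : X} (α : Path x₀ x) (𝒰 : Set (Set X)) (U : Set X) :
    Set (FundamentalGroup X x₀) :=
  {g | ∃ (γ : Path x x) (δ : Path x x₀), loopClass γ ∈ spanierGroupAt x 𝒰 ∧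
    (∀ t, δ t ∈ U) ∧ g = loopClass ((α.trans γ).trans δ)}

theorem loopClass_eq_loopClass {x : X} {γ₁ γ₂ : Path x x} (h : mk γ₁ = mk γ₂) :
    loopClass γ₁ = loopClass γ₂ :=
  h

theorem loopClass_trans {x : X} (γ₁ γ₂ : Path x x) :
    loopClass (γ₁.trans γ₂) = loopClass γ₂ * loopClass γ₁ :=
  rfl

theorem exists_loopClass_eq {x : X} (g : FundamentalGroup X x) : ∃ γ : Path x x, loopClass γ = g :=
  Quotient.exists_rep g

theorem fundamentalGroupMulEquivOfPath_symm_apply {x₀ x₁ : X} (p : Path x₀ x₁)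
    (g : FundamentalGroup X x₁) :
    fundamentalGroupMulEquivOfPath p (fundamentalGroupMulEquivOfPath p.symm g) = g := by
  obtain ⟨γ, rfl⟩ := exists_loopClass_eq g
  refine loopClass_eq_loopClass ?_
  simp only [Path.symm_symm, mk_trans, mk_symm, ← trans_assoc, symm_trans, refl_trans]
  rw [trans_assoc, symm_trans, trans_refl]

theorem map_spanierGroupAt_le {x₀ x₁ : X} (p : Path x₀ x₁) (𝒰 : Set (Set X)) :
    (spanierGroupAt x₀ 𝒰).map (fundamentalGroupMulEquivOfPath p).toMonoidHom
      ≤ spanierGroupAt x₁ 𝒰 := by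
  rw [Subgroup.map_le_iff_le_comap, spanierGroupAt, Subgroup.closure_le]
  rintro _ ⟨y, α, β, U, hU, hβ, rfl⟩
  refine Subgroup.subset_closure ⟨y, p.symm.trans α, β, U, hU, hβ, loopClass_eq_loopClass ?_⟩
  simp [Path.trans_symm]

theorem map_spanierGroupAt {x₀ x₁ : X} (p : Path x₀ x₁) (𝒰 : Set (Set X)) :
    (spanierGroupAt x₀ 𝒰).map (fundamentalGroupMulEquivOfPath p).toMonoidHom
      = spanierGroupAt x₁ 𝒰 :=
  (map_spanierGroupAt_le p 𝒰).antisymm fun g hg =>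
    ⟨_, map_spanierGroupAt_le p.symm 𝒰 ⟨g, hg, rfl⟩, fundamentalGroupMulEquivOfPath_symm_apply p g⟩

theorem spanierGroupAt_mono {x : X} {𝒰 𝒱 : Set (Set X)} (h : ∀ U ∈ 𝒰, ∃ V ∈ 𝒱, U ⊆ V) :
    spanierGroupAt x 𝒰 ≤ spanierGroupAt x 𝒱 := by
  rw [spanierGroupAt, Subgroup.closure_le]
  rintro _ ⟨y, α, β, U, hU, hβ, rfl⟩
  obtain ⟨V, hV, hUV⟩ := h U hU
  exact Subgroup.subset_closure ⟨y, α, β, V, hV, fun t => hUV (hβ t), rfl⟩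

theorem IsOpenCover.image2_inter {𝒰 𝒱 : Set (Set X)} (h𝒰 : IsOpenCover 𝒰) (h𝒱 : IsOpenCover 𝒱) :
    IsOpenCover (Set.image2 (· ∩ ·) 𝒰 𝒱) := by
  refine ⟨Set.forall_mem_image2.2 fun U hU V hV => (h𝒰.1 U hU).inter (h𝒱.1 V hV), ?_⟩
  refine Set.sUnion_eq_univ_iff.2 fun z => ?_
  obtain ⟨U, hU, hzU⟩ := Set.sUnion_eq_univ_iff.1 h𝒰.2 z
  obtain ⟨V, hV, hzV⟩ := Set.sUnion_eq_univ_iff.1 h𝒱.2 z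
  exact ⟨U ∩ V, Set.mem_image2_of_mem hU hV, hzU, hzV⟩

theorem directedOn_spanierGroupAt (x : X) :
    DirectedOn ((fun 𝒰 => (spanierGroupAt x 𝒰 : Set (FundamentalGroup X x))) ⁻¹'o (· ⊇ ·))
      {𝒰 | IsOpenCover 𝒰} := fun _ h𝒰 _ h𝒱 =>
  ⟨_, h𝒰.image2_inter h𝒱,
    spanierGroupAt_mono (Set.forall_mem_image2.2 fun U hU _ _ => ⟨U, hU, Set.inter_subset_left⟩),
    spanierGroupAt_mono (Set.forall_mem_image2.2 fun _ _ V hV => ⟨V, hV, Set.inter_subset_right⟩)⟩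

theorem spanierGroupAt_subset_lassoBasicSet {x₀ x : X} {α : Path x₀ x} {𝒰 : Set (Set X)}
    {U : Set X} (h1 : 1 ∈ lassoBasicSet α 𝒰 U) :
    (spanierGroupAt x₀ 𝒰 : Set (FundamentalGroup X x₀)) ⊆ lassoBasicSet α 𝒰 U := by
  obtain ⟨γ₀, δ₀, hγ₀, hδ₀, hone⟩ := h1
  replace hone : mk ((α.trans γ₀).trans δ₀) = refl x₀ := hone.symm
  intro g hg
  obtain ⟨l, rfl⟩ := exists_loopClass_eq g
  -- `[l] = [α∗γ₀∗δ₀∗l] = [α∗(γ₀∗δ₀∗l∗δ₀⁻¹)∗δ₀]`, and `[δ₀∗l∗δ₀⁻¹] ∈ π(𝒰, x)`.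
  refine ⟨γ₀.trans ((δ₀.trans l).trans δ₀.symm), δ₀, ?_, hδ₀, loopClass_eq_loopClass ?_⟩
  · rw [loopClass_trans]
    refine mul_mem ?_ hγ₀
    rw [← map_spanierGroupAt δ₀.symm]
    exact ⟨loopClass l, hg, loopClass_eq_loopClass (by simp)⟩
  · calc mk l = (mk ((α.trans γ₀).trans δ₀)).trans (mk l) := by rw [hone, refl_trans]
      _ = _ := by simp

theorem exists_spanierGroupAt_subset_of_mem_nhds_one {x₀ : X} {S : Set (FundamentalGroup X x₀)}
    (hS : S ∈ @nhds _ (lassoPi1 x₀) 1) :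
    ∃ 𝒰, IsOpenCover 𝒰 ∧ (spanierGroupAt x₀ 𝒰 : Set (FundamentalGroup X x₀)) ⊆ S := by
  have hbasis := Filter.hasBasis_biInf_principal (directedOn_spanierGroupAt x₀)
    ⟨{Set.univ}, by simp [IsOpenCover]⟩
  rw [lassoPi1, TopologicalSpace.nhds_generateFrom] at hS
  refine hbasis.mem_iff.1 (Filter.le_def.1 ?_ S hS)
  refine le_iInf₂ ?_
  rintro _ ⟨h1, x, α, 𝒰, U, h𝒰, -, -, rfl⟩
  exact Filter.le_principal_iff.2 (hbasis.mem_iff.2 ⟨𝒰, h𝒰, spanierGroupAt_subset_lassoBasicSet h1⟩)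

theorem strongHSLTAt_of_spanierGroupAt_le {x : X} {K : Subgroup (FundamentalGroup X x)}
    {𝒰 : Set (Set X)} (h𝒰 : IsOpenCover 𝒰) (hK : spanierGroupAt x 𝒰 ≤ K) : StrongHSLTAt x K := by
  intro y U _ hxU
  obtain ⟨V, hV, hyV⟩ := Set.sUnion_eq_univ_iff.1 h𝒰.2 y
  refine ⟨V, h𝒰.1 V hV, hyV, fun β hβ α => ⟨Path.refl x, fun _ => hxU, ?_⟩⟩
  rw [show loopClass (Path.refl x) = 1 from rfl, inv_one, mul_one]
  exact hK (Subgroup.subset_closure ⟨y, α, β, V, hV, hβ, rfl⟩)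

theorem strongHSLT_of_lasso_open (x₀ : X) (H : Subgroup (FundamentalGroup X x₀))
    (hopen : IsOpen[lassoPi1 x₀] (H : Set (FundamentalGroup X x₀))) :
    StrongHSLT x₀ H := by
  obtain ⟨𝒰, h𝒰, hH⟩ := exists_spanierGroupAt_subset_of_mem_nhds_one
    (@IsOpen.mem_nhds _ (lassoPi1 x₀) _ _ hopen H.one_mem)
  intro x δ
  refine strongHSLTAt_of_spanierGroupAt_le h𝒰 ?_
  rw [← map_spanierGroupAt δ 𝒰]
  exact Subgroup.map_mono hH

end
end
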